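/- For a linear classifier h_θ(x) = sign(xᵀθ) under the Gaussian mixture model x | y ∼ N(yWμ, WWᵀ) with identity feature map, and ℓ₂ perturbations of size ε, the boundary risk equals Φ((ε‖θ‖₂ − θᵀWμ)/‖Wᵀθ‖₂) − Φ(−θᵀWμ/‖Wᵀθ‖₂), and hence BR(h_θ) ≤ ε‖θ‖₂/(√(2π)‖Wᵀθ‖₂). -/

import Mathlib

/-!
Given the label `y`, the score `xᵀθ` of `x = W(yμ + z)` is `y θᵀWμ + (Wᵀθ)ᵀz`, a Gaussian with
standard deviation `‖Wᵀθ‖`. An `ℓ₂` perturbation of size `ε` moves the score by at most `ε‖θ‖`,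
and the extreme shift is attained along `θ`, so the robust error event is the clean error event
with the threshold `0` moved to the margin `ε‖θ‖`. Both risks are therefore values of `Φ`, and
their difference is bounded since `Φ` is `1/√(2π)`-Lipschitz.
-/

open MeasureTheory ProbabilityTheory Matrix

/-- Euclidean norm on ℝ^n. -/
noncomputable def l2Norm {n : ℕ} (u : Fin n → ℝ) : ℝ := Real.sqrt (∑ i, u i ^ 2)

/-- Standard normal CDF. -/
noncomputable def stdPhi (t : ℝ) : ℝ :=
  ∫ u in Set.Iic t, Real.exp (-u ^ 2 / 2) / Real.sqrt (2 * Real.pi)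

open Real Set Metric
open scoped RealInnerProductSpace

lemma gaussianPDFReal_zero_one (u : ℝ) :
    gaussianPDFReal 0 1 u = exp (-u ^ 2 / 2) / √(2 * π) := by
  simp [gaussianPDFReal, div_eq_inv_mul]

lemma gaussianPDFReal_zero_one_le (u : ℝ) : gaussianPDFReal 0 1 u ≤ (√(2 * π))⁻¹ := by
  rw [gaussianPDFReal_zero_one, div_eq_inv_mul]
  refine mul_le_of_le_one_right (by positivity) (exp_le_one_iff.2 ?_)
  nlinarith [sq_nonneg u]

lemma stdPhi_eq_integral_gaussianPDFReal (t : ℝ) :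
    stdPhi t = ∫ u in Iic t, gaussianPDFReal 0 1 u := by
  simp only [stdPhi, gaussianPDFReal_zero_one]

lemma stdPhi_eq_gaussianReal_Iic (t : ℝ) : stdPhi t = (gaussianReal 0 1 (Iic t)).toReal := by
  rw [gaussianReal_apply_eq_integral 0 one_ne_zero, ENNReal.toReal_ofReal
    (setIntegral_nonneg measurableSet_Iic fun u _ => gaussianPDFReal_nonneg _ _ _),
    stdPhi_eq_integral_gaussianPDFReal]

lemma stdPhi_sub_le {a b : ℝ} (hab : a ≤ b) : stdPhi b - stdPhi a ≤ (b - a) / √(2 * π) := by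
  simp only [stdPhi_eq_integral_gaussianPDFReal]
  rw [intervalIntegral.integral_Iic_sub_Iic (integrable_gaussianPDFReal 0 1).integrableOn
    (integrable_gaussianPDFReal 0 1).integrableOn, intervalIntegral.integral_of_le hab]
  calc ∫ u in Ioc a b, gaussianPDFReal 0 1 u ≤ ∫ _ in Ioc a b, (√(2 * π))⁻¹ :=
        setIntegral_mono_on (integrable_gaussianPDFReal 0 1).integrableOn
          (integrableOn_const measure_Ioc_lt_top.ne) measurableSet_Ioc
          fun u _ => gaussianPDFReal_zero_one_le u
    _ = (b - a) / √(2 * π) := by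
        rw [setIntegral_const, Real.volume_real_Ioc_of_le hab, smul_eq_mul, div_eq_mul_inv]

lemma dotProduct_eq_inner_toLp {ι : Type*} [Fintype ι] (u w : ι → ℝ) :
    u ⬝ᵥ w = ⟪WithLp.toLp 2 u, WithLp.toLp 2 w⟫ := by
  simp [EuclideanSpace.inner_toLp_toLp, dotProduct_comm]

lemma map_pi_gaussianReal_dotProduct {ι : Type*} [Fintype ι] (v : ι → ℝ) :
    (Measure.pi fun _ : ι => gaussianReal 0 1).map (v ⬝ᵥ ·) =
      gaussianReal 0 (‖WithLp.toLp 2 v‖ ^ 2).toNNReal := by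
  have hv : (v ⬝ᵥ ·) = innerSL ℝ (WithLp.toLp 2 v) ∘ WithLp.toLp 2 := by
    ext z; simp [dotProduct_eq_inner_toLp]
  rw [hv, ← Measure.map_map (by fun_prop) (by fun_prop), map_pi_eq_stdGaussian,
    IsGaussian.map_eq_gaussianReal, integral_strongDual_stdGaussian, variance_dual_stdGaussian,
    innerSL_apply_norm]

lemma gaussianReal_Iic_toReal {σ : ℝ} (hσ : 0 < σ) (c : ℝ) :
    (gaussianReal 0 (σ ^ 2).toNNReal (Iic c)).toReal = stdPhi (c / σ) := by
  have hmap : (gaussianReal 0 1).map (σ * ·) = gaussianReal 0 (σ ^ 2).toNNReal := by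
    rw [gaussianReal_map_const_mul, mul_zero, mul_one]
    congr 1
    ext
    simp [sq_nonneg]
  have hpre : (σ * ·) ⁻¹' Iic c = Iic (c / σ) := by
    ext u
    simp [le_div_iff₀ hσ, mul_comm]
  rw [← hmap, Measure.map_apply (by fun_prop) measurableSet_Iic, hpre, stdPhi_eq_gaussianReal_Iic]

section PiGaussian

variable {ι : Type*} [Fintype ι] {v : ι → ℝ}

lemma pi_gaussianReal_dotProduct_le_toReal (hv : v ≠ 0) (c : ℝ) :
    (Measure.pi (fun _ : ι => gaussianReal 0 1) {z | v ⬝ᵥ z ≤ c}).toReal =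
      stdPhi (c / ‖WithLp.toLp 2 v‖) := by
  rw [← gaussianReal_Iic_toReal (by simpa using hv), ← map_pi_gaussianReal_dotProduct,
    Measure.map_apply (by fun_prop) measurableSet_Iic]
  rfl

lemma pi_gaussianReal_dotProduct_lt_toReal (hv : v ≠ 0) (c : ℝ) :
    (Measure.pi (fun _ : ι => gaussianReal 0 1) {z | v ⬝ᵥ z < c}).toReal =
      stdPhi (c / ‖WithLp.toLp 2 v‖) := by
  have := nullSingletonClass_gaussianReal (μ := 0) (v := (‖WithLp.toLp 2 v‖ ^ 2).toNNReal)
    (by simpa using hv)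
  have hmap := map_pi_gaussianReal_dotProduct v
  rw [← pi_gaussianReal_dotProduct_le_toReal hv]
  calc _ = ((Measure.pi fun _ : ι => gaussianReal 0 1).map (v ⬝ᵥ ·) (Iio c)).toReal := by
        rw [Measure.map_apply (by fun_prop) measurableSet_Iio]; rfl
    _ = ((Measure.pi fun _ : ι => gaussianReal 0 1).map (v ⬝ᵥ ·) (Iic c)).toReal := by
        rw [hmap, measure_congr Iio_ae_eq_Iic]
    _ = _ := by rw [Measure.map_apply (by fun_prop) measurableSet_Iic]; rfl

end PiGaussian

section ClosedBall

variable {F : Type*} [NormedAddCommGroup F] [InnerProductSpace ℝ F] {x θ : F} {ε c : ℝ}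

lemma abs_inner_sub_inner_le_of_mem_closedBall {x' : F} (hx' : x' ∈ closedBall x ε) :
    |⟪x', θ⟫ - ⟪x, θ⟫| ≤ ε * ‖θ‖ := by
  rw [← inner_sub_left]
  exact (abs_real_inner_le_norm _ _).trans
    (mul_le_mul_of_nonneg_right (mem_closedBall_iff_norm.1 hx') (norm_nonneg _))

lemma exists_mem_closedBall_inner_eq_sub (hε : 0 ≤ ε) :
    ∃ x' ∈ closedBall x ε, ⟪x', θ⟫ = ⟪x, θ⟫ - ε * ‖θ‖ := by
  refine ⟨x - (ε * ‖θ‖⁻¹) • θ, ?_, ?_⟩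
  · rw [mem_closedBall_iff_norm, sub_sub_cancel_left, norm_neg, norm_smul, Real.norm_eq_abs,
      abs_of_nonneg (by positivity), mul_assoc]
    exact mul_le_of_le_one_right hε (inv_mul_le_one_of_le₀ le_rfl (norm_nonneg _))
  · rw [inner_sub_left, real_inner_smul_left, real_inner_self_eq_norm_sq]
    rcases eq_or_ne ‖θ‖ 0 with h | h
    · simp [h]
    · field_simp

lemma exists_mem_closedBall_inner_lt_iff (hε : 0 ≤ ε) :
    (∃ x' ∈ closedBall x ε, ⟪x', θ⟫ < c) ↔ ⟪x, θ⟫ - ε * ‖θ‖ < c := by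
  refine ⟨fun ⟨x', hx', hlt⟩ => ?_, fun h => ?_⟩
  · linarith [neg_abs_le (⟪x', θ⟫ - ⟪x, θ⟫), abs_inner_sub_inner_le_of_mem_closedBall (θ := θ) hx']
  · obtain ⟨x', hx', heq⟩ := exists_mem_closedBall_inner_eq_sub (x := x) (θ := θ) hε
    exact ⟨x', hx', heq ▸ h⟩

lemma exists_mem_closedBall_le_inner_iff (hε : 0 ≤ ε) :
    (∃ x' ∈ closedBall x ε, c ≤ ⟪x', θ⟫) ↔ c ≤ ⟪x, θ⟫ + ε * ‖θ‖ := by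
  refine ⟨fun ⟨x', hx', hle⟩ => ?_, fun h => ?_⟩
  · linarith [le_abs_self (⟪x', θ⟫ - ⟪x, θ⟫), abs_inner_sub_inner_le_of_mem_closedBall (θ := θ) hx']
  · obtain ⟨x', hx', heq⟩ := exists_mem_closedBall_inner_eq_sub (x := x) (θ := -θ) hε
    refine ⟨x', hx', ?_⟩
    rw [inner_neg_right, inner_neg_right, norm_neg] at heq
    linarith

end ClosedBall

lemma l2Norm_eq_norm_toLp {n : ℕ} (u : Fin n → ℝ) : l2Norm u = ‖WithLp.toLp 2 u‖ := by
  simp [l2Norm, EuclideanSpace.norm_eq]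

lemma exists_l2Norm_sub_le_iff {n : ℕ} {x : Fin n → ℝ} {ε : ℝ} {p : (Fin n → ℝ) → Prop} :
    (∃ x', l2Norm (x' - x) ≤ ε ∧ p x') ↔
      ∃ x' ∈ closedBall (WithLp.toLp 2 x) ε, p (WithLp.ofLp x') := by
  simp only [mem_closedBall, dist_eq_norm]
  refine ⟨fun ⟨x', h, hp⟩ => ⟨WithLp.toLp 2 x', ?_, hp⟩, fun ⟨x', h, hp⟩ => ⟨x'.ofLp, ?_, hp⟩⟩
  · simpa [l2Norm_eq_norm_toLp] using h
  · simpa [l2Norm_eq_norm_toLp] using h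

section LinearClassifier

variable {d k : ℕ}

noncomputable def linearClassifier (θ x : Fin d → ℝ) : ℝ := if 0 ≤ x ⬝ᵥ θ then 1 else -1

/-- Points with label `0` belong to it, as `h x * 0 ≤ 0` counts as an error. -/
def marginErrorSet (θ : Fin d → ℝ) (c : ℝ) : Set ((Fin d → ℝ) × ℝ) :=
  {p | (0 < p.2 ∧ p.1 ⬝ᵥ θ < c) ∨ (p.2 < 0 ∧ -c ≤ p.1 ⬝ᵥ θ) ∨ p.2 = 0}

lemma measurableSet_marginErrorSet (θ : Fin d → ℝ) (c : ℝ) :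
    MeasurableSet (marginErrorSet θ c) := by
  unfold marginErrorSet
  measurability

lemma linearClassifier_mul_nonpos_iff (θ x : Fin d → ℝ) (y : ℝ) :
    linearClassifier θ x * y ≤ 0 ↔ (0 < y ∧ x ⬝ᵥ θ < 0) ∨ (y < 0 ∧ 0 ≤ x ⬝ᵥ θ) ∨ y = 0 := by
  unfold linearClassifier
  split_ifs <;> grind

lemma setOf_linearClassifier_mul_nonpos (θ : Fin d → ℝ) :
    {p : (Fin d → ℝ) × ℝ | linearClassifier θ p.1 * p.2 ≤ 0} = marginErrorSet θ 0 := by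
  ext p
  simp [marginErrorSet, linearClassifier_mul_nonpos_iff]

lemma setOf_exists_l2Norm_sub_le_linearClassifier_mul_nonpos (θ : Fin d → ℝ) {ε : ℝ}
    (hε : 0 ≤ ε) :
    {p : (Fin d → ℝ) × ℝ | ∃ x', l2Norm (x' - p.1) ≤ ε ∧ linearClassifier θ x' * p.2 ≤ 0} =
      marginErrorSet θ (ε * l2Norm θ) := by
  ext ⟨x, y⟩
  simp only [mem_ofPred_eq, marginErrorSet, linearClassifier_mul_nonpos_iff]
  rcases lt_trichotomy y 0 with hy | rfl | hy
  · simp only [hy, hy.not_gt, hy.ne, false_and, true_and, false_or, or_false,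
      exists_l2Norm_sub_le_iff, dotProduct_eq_inner_toLp, WithLp.toLp_ofLp]
    rw [exists_mem_closedBall_le_inner_iff hε, l2Norm_eq_norm_toLp, neg_le_iff_add_nonneg]
  · exact iff_of_true ⟨x, by simpa [l2Norm_eq_norm_toLp] using hε, by simp⟩ (by simp)
  · simp only [hy, hy.not_gt, hy.ne', false_and, true_and, or_false,
      exists_l2Norm_sub_le_iff, dotProduct_eq_inner_toLp, WithLp.toLp_ofLp]
    rw [exists_mem_closedBall_inner_lt_iff hε, l2Norm_eq_norm_toLp, sub_neg]

end LinearClassifier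

section GaussianMixture

variable {d k : ℕ}

noncomputable def gaussianMixture (W : Matrix (Fin d) (Fin k) ℝ) (μ : Fin k → ℝ) :
    Measure ((Fin d → ℝ) × ℝ) :=
  (2:ENNReal)⁻¹ • ((Measure.pi fun _ : Fin k => gaussianReal 0 1).map
      (fun z => (W.mulVec (μ + z), (1:ℝ)))) +
    (2:ENNReal)⁻¹ • ((Measure.pi fun _ : Fin k => gaussianReal 0 1).map
      (fun z => (W.mulVec (-μ + z), (-1:ℝ))))

lemma gaussianMixture_marginErrorSet_toReal {W : Matrix (Fin d) (Fin k) ℝ} {θ : Fin d → ℝ}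
    (hθ : Wᵀ *ᵥ θ ≠ 0) (μ : Fin k → ℝ) (c : ℝ) :
    (gaussianMixture W μ (marginErrorSet θ c)).toReal =
      stdPhi ((c - θ ⬝ᵥ W *ᵥ μ) / l2Norm (Wᵀ *ᵥ θ)) := by
  set m := θ ⬝ᵥ W *ᵥ μ
  have hpos : (fun z => (W *ᵥ (μ + z), (1:ℝ))) ⁻¹' marginErrorSet θ c =
      {z | Wᵀ *ᵥ θ ⬝ᵥ z < c - m} := by
    ext z
    simp [marginErrorSet, dotProduct_comm _ θ, mulVec_add, dotProduct_mulVec,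
      ← mulVec_transpose, m, lt_sub_iff_add_lt', show ¬(1:ℝ) < 0 by norm_num]
  have hneg : (fun z => (W *ᵥ (-μ + z), (-1:ℝ))) ⁻¹' marginErrorSet θ c =
      {z | -(Wᵀ *ᵥ θ) ⬝ᵥ z ≤ c - m} := by
    ext z
    simp [marginErrorSet, dotProduct_comm _ θ, mulVec_add, dotProduct_mulVec,
      ← mulVec_transpose, m, add_comm c, show ¬(1:ℝ) < 0 by norm_num]
  have hmeas := measurableSet_marginErrorSet θ c
  rw [gaussianMixture, Measure.add_apply, Measure.smul_apply, Measure.smul_apply,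
    Measure.map_apply (by fun_prop) hmeas, Measure.map_apply (by fun_prop) hmeas, hpos, hneg,
    smul_eq_mul, smul_eq_mul, ENNReal.toReal_add (by finiteness) (by finiteness),
    ENNReal.toReal_mul, ENNReal.toReal_mul, pi_gaussianReal_dotProduct_lt_toReal hθ,
    pi_gaussianReal_dotProduct_le_toReal (neg_ne_zero.2 hθ), WithLp.toLp_neg, norm_neg,
    l2Norm_eq_norm_toLp]
  norm_num
  ring

end GaussianMixture

/-- For the linear classifier `h_θ(x) = sign(xᵀθ)` under the balanced Gaussian
mixture `x | y ∼ N(yWμ, WWᵀ)` with ℓ₂ perturbations of size `ε`, the boundary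
risk equals `Φ((ε‖θ‖ - θᵀWμ)/‖Wᵀθ‖) - Φ(-θᵀWμ/‖Wᵀθ‖)` and is at most
`ε‖θ‖/(√(2π)‖Wᵀθ‖)`. -/
theorem linear_classifier_boundary_risk {d k : ℕ} (W : Matrix (Fin d) (Fin k) ℝ)
    (μ : Fin k → ℝ) (θ : Fin d → ℝ) (hθ : Wᵀ.mulVec θ ≠ 0)
    (ε : ℝ) (hε : 0 ≤ ε)
    (P : Measure ((Fin d → ℝ) × ℝ))
    (hP : P = (2:ENNReal)⁻¹ •
        ((Measure.pi fun _ : Fin k => gaussianReal 0 1).map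
          (fun z => (W.mulVec (μ + z), (1:ℝ)))) +
      (2:ENNReal)⁻¹ •
        ((Measure.pi fun _ : Fin k => gaussianReal 0 1).map
          (fun z => (W.mulVec (-μ + z), (-1:ℝ)))))
    (h : (Fin d → ℝ) → ℝ) (hh : h = fun x => if 0 ≤ x ⬝ᵥ θ then 1 else -1) :
    (P {p | ∃ x', l2Norm (x' - p.1) ≤ ε ∧ h x' * p.2 ≤ 0}).toReal -
        (P {p | h p.1 * p.2 ≤ 0}).toReal =
      stdPhi ((ε * l2Norm θ - θ ⬝ᵥ W.mulVec μ) / l2Norm (Wᵀ.mulVec θ)) -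
        stdPhi (-(θ ⬝ᵥ W.mulVec μ) / l2Norm (Wᵀ.mulVec θ)) ∧
    (P {p | ∃ x', l2Norm (x' - p.1) ≤ ε ∧ h x' * p.2 ≤ 0}).toReal -
        (P {p | h p.1 * p.2 ≤ 0}).toReal ≤
      ε * l2Norm θ / (Real.sqrt (2 * Real.pi) * l2Norm (Wᵀ.mulVec θ)) := by
  obtain rfl : P = gaussianMixture W μ := hP
  obtain rfl : h = linearClassifier θ := hh
  rw [setOf_exists_l2Norm_sub_le_linearClassifier_mul_nonpos θ hε,
    setOf_linearClassifier_mul_nonpos, gaussianMixture_marginErrorSet_toReal hθ,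
    gaussianMixture_marginErrorSet_toReal hθ, zero_sub]
  refine ⟨rfl, (stdPhi_sub_le ?_).trans_eq ?_⟩
  · have hσ : 0 < l2Norm (Wᵀ *ᵥ θ) := by simpa [l2Norm_eq_norm_toLp] using hθ
    have : 0 ≤ ε * l2Norm θ := mul_nonneg hε (Real.sqrt_nonneg _)
    exact div_le_div_of_nonneg_right (by linarith) hσ.le
  · rw [← sub_div, div_div, mul_comm (l2Norm _), sub_neg_eq_add, sub_add_cancel]
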